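/- arXiv:1703.05800 — 4 statements merged into one kernel-verified Lean document; each statement's English description precedes it below -/
import Mathlib

section
/- Let β > 0, ε > 0, and let E : {1,…,d} → ℝ, e : {1,…,d'} → ℝ and c : {1,…,d} → {1,…,d'} satisfy |E_j − e_{c(j)}| ≤ ε for all j. Define Z = ∑_{j=1}^{d} e^{−βE_j}, Z̃ = ∑_{j=1}^{d} e^{−βe_{c(j)}}, and the probability distributions p(j) = e^{−βE_j}/Z and q(j) = e^{−βe_{c(j)}}/Z̃ on {1,…,d}. Then ∑_{j=1}^{d} |p(j) − q(j)| ≤ √(4εβ). -/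
/-!
Write `w j = exp (-β E j)` and `v j = exp (-β e (c j))`. Since `|E j - e (c j)| ≤ ε`, both ratios
`v j / w j` and `w j / v j` are at most `exp (βε)`, hence `w j + v j ≤ 2 cosh (βε/2) √(w j v j)`.
Summing and using `2 √(Z Z̃) ≤ Z + Z̃` bounds the Bhattacharyya coefficient `B = ∑ √(p j q j)`
below by `1 / cosh (βε/2)`. Writing `p - q = (√p - √q)(√p + √q)`, Cauchy–Schwarz gives
`(∑ |p - q|)² ≤ 4 (1 - B²) ≤ 4 tanh² (βε/2)`, and `tanh² (x/2) ≤ x` for `x ≥ 0`.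
-/

open Real Finset

variable {ι : Type*} [Fintype ι]

noncomputable def bhattacharyyaCoeff (p q : ι → ℝ) : ℝ := ∑ i, √(p i * q i)

theorem sq_sum_abs_sub_le_four_mul_one_sub_bhattacharyyaCoeff_sq {p q : ι → ℝ}
    (hp : ∀ i, 0 ≤ p i) (hq : ∀ i, 0 ≤ q i) (hp1 : ∑ i, p i = 1) (hq1 : ∑ i, q i = 1) :
    (∑ i, |p i - q i|) ^ 2 ≤ 4 * (1 - bhattacharyyaCoeff p q ^ 2) := by
  set x : ι → ℝ := fun i => √(p i)
  set y : ι → ℝ := fun i => √(q i)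
  set B := bhattacharyyaCoeff p q
  have hx2 (i : ι) : x i ^ 2 = p i := sq_sqrt (hp i)
  have hy2 (i : ι) : y i ^ 2 = q i := sq_sqrt (hq i)
  have hB : B = ∑ i, x i * y i := sum_congr rfl fun i _ => sqrt_mul (hp i) _
  have habs (i : ι) : |p i - q i| = |x i - y i| * (x i + y i) := by
    rw [← hx2, ← hy2, sq_sub_sq, abs_mul, abs_of_nonneg (by positivity : 0 ≤ x i + y i),
      mul_comm]
  have hminus : ∑ i, |x i - y i| ^ 2 = 2 - 2 * B := by
    simp only [sq_abs, sub_sq, hx2, hy2, sum_add_distrib, sum_sub_distrib, hp1, hq1, hB,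
      mul_assoc, ← mul_sum]
    ring
  have hplus : ∑ i, (x i + y i) ^ 2 = 2 + 2 * B := by
    simp only [add_sq, hx2, hy2, sum_add_distrib, hp1, hq1, hB, mul_assoc, ← mul_sum]
    ring
  calc (∑ i, |p i - q i|) ^ 2 = (∑ i, |x i - y i| * (x i + y i)) ^ 2 := by simp only [habs]
    _ ≤ (∑ i, |x i - y i| ^ 2) * ∑ i, (x i + y i) ^ 2 := sum_mul_sq_le_sq_mul_sq _ _ _
    _ = 4 * (1 - B ^ 2) := by rw [hminus, hplus]; ring

theorem add_le_two_mul_cosh_half_mul_sqrt_mul {a w v : ℝ} (hw : 0 ≤ w) (hv : 0 ≤ v)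
    (hvw : v ≤ exp a * w) (hwv : w ≤ exp a * v) :
    w + v ≤ 2 * cosh (a / 2) * √(w * v) := by
  set M := exp (a / 2)
  have hM : 0 < M := exp_pos _
  have hMsq : exp a = M ^ 2 := by rw [← exp_nat_mul]; ring_nf
  have hsqrt {s t : ℝ} (h : t ≤ exp a * s) : √t ≤ M * √s := by
    rw [hMsq] at h
    simpa [sqrt_mul (sq_nonneg M), sqrt_sq hM.le] using sqrt_le_sqrt h
  have hcosh : 2 * cosh (a / 2) = M + M⁻¹ := by rw [cosh_eq, exp_neg]; ring
  rw [hcosh, sqrt_mul hw, ← sq_sqrt hw, ← sq_sqrt hv, sqrt_sq (sqrt_nonneg _),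
    sqrt_sq (sqrt_nonneg _)]
  have key := mul_nonneg (sub_nonneg.mpr (hsqrt hvw)) (sub_nonneg.mpr (hsqrt hwv))
  linear_combination M⁻¹ * key + (M * √w * √v - √w ^ 2 - √v ^ 2) * mul_inv_cancel₀ hM.ne'

theorem inv_cosh_half_le_bhattacharyyaCoeff {a : ℝ} {w v : ι → ℝ} (hw : ∀ i, 0 ≤ w i)
    (hv : ∀ i, 0 ≤ v i) (hW : 0 < ∑ i, w i) (hV : 0 < ∑ i, v i)
    (hvw : ∀ i, v i ≤ exp a * w i) (hwv : ∀ i, w i ≤ exp a * v i) :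
    (cosh (a / 2))⁻¹ ≤
      bhattacharyyaCoeff (fun i => w i / ∑ j, w j) (fun i => v i / ∑ j, v j) := by
  set W := ∑ j, w j
  set V := ∑ j, v j
  have hWV : 0 < √(W * V) := sqrt_pos.mpr (mul_pos hW hV)
  have hcoeff : bhattacharyyaCoeff (fun i => w i / W) (fun i => v i / V) =
      (∑ i, √(w i * v i)) / √(W * V) := by
    rw [bhattacharyyaCoeff, sum_div]
    exact sum_congr rfl fun i _ => by rw [div_mul_div_comm, sqrt_div' _ (mul_pos hW hV).le]
  have hsum : W + V ≤ 2 * cosh (a / 2) * ∑ i, √(w i * v i) := by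
    rw [← sum_add_distrib, mul_sum]
    exact sum_le_sum fun i _ =>
      add_le_two_mul_cosh_half_mul_sqrt_mul (hw i) (hv i) (hvw i) (hwv i)
  have hamgm : 2 * √(W * V) ≤ W + V := by
    nlinarith [sq_nonneg (√W - √V), sq_sqrt hW.le, sq_sqrt hV.le, sqrt_mul hW.le V]
  rw [hcoeff, inv_eq_one_div, div_le_div_iff₀ (cosh_pos _) hWV]
  linarith

theorem one_sub_inv_cosh_half_sq_le {a : ℝ} (ha : 0 ≤ a) : 1 - (cosh (a / 2) ^ 2)⁻¹ ≤ a := by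
  have hcosh : cosh (a / 2) ^ 2 ≤ exp ((a / 2) ^ 2) := by
    calc cosh (a / 2) ^ 2 ≤ exp ((a / 2) ^ 2 / 2) ^ 2 :=
          pow_le_pow_left₀ (cosh_pos _).le (cosh_le_exp_half_sq _) 2
      _ = exp ((a / 2) ^ 2) := by rw [← exp_nat_mul]; ring_nf
  have hinv : exp (-(a / 2) ^ 2) ≤ (cosh (a / 2) ^ 2)⁻¹ := by
    rw [exp_neg]; exact inv_anti₀ (by positivity) hcosh
  have hexp := add_one_le_exp (-(a / 2) ^ 2)
  have hpos : 0 ≤ (cosh (a / 2) ^ 2)⁻¹ := by positivity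
  rcases le_total a 4 with h | h <;> nlinarith

theorem sq_sum_abs_sub_normalize_le {a : ℝ} (ha : 0 ≤ a) {w v : ι → ℝ} (hw : ∀ i, 0 ≤ w i)
    (hv : ∀ i, 0 ≤ v i) (hW : 0 < ∑ i, w i) (hV : 0 < ∑ i, v i)
    (hvw : ∀ i, v i ≤ exp a * w i) (hwv : ∀ i, w i ≤ exp a * v i) :
    (∑ i, |w i / ∑ j, w j - v i / ∑ j, v j|) ^ 2 ≤ 4 * a := by
  have hB := inv_cosh_half_le_bhattacharyyaCoeff hw hv hW hV hvw hwv
  have hB2 : (cosh (a / 2) ^ 2)⁻¹ ≤ bhattacharyyaCoeff (fun i => w i / ∑ j, w j)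
      (fun i => v i / ∑ j, v j) ^ 2 := by
    rw [← inv_pow]; exact pow_le_pow_left₀ (by positivity) hB 2
  have hTV := sq_sum_abs_sub_le_four_mul_one_sub_bhattacharyyaCoeff_sq
    (fun i => div_nonneg (hw i) hW.le) (fun i => div_nonneg (hv i) hV.le)
    (by rw [← sum_div, div_self hW.ne']) (by rw [← sum_div, div_self hV.ne'])
  linarith [one_sub_inv_cosh_half_sq_le ha]

theorem exp_neg_mul_le_exp_mul_mul_exp_neg_mul {β ε x y : ℝ} (hβ : 0 ≤ β) (h : |x - y| ≤ ε) :
    exp (-β * y) ≤ exp (β * ε) * exp (-β * x) := by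
  rw [← exp_add, exp_le_exp]
  nlinarith [mul_le_mul_of_nonneg_left ((le_abs_self _).trans h) hβ]

theorem lumped_gibbs_total_variation_bound_general
    {d d' : ℕ} (β ε : ℝ) (hβ : 0 < β)
    (E : Fin d → ℝ) (e : Fin d' → ℝ) (c : Fin d → Fin d')
    (hclose : ∀ j, |E j - e (c j)| ≤ ε)
    (Z Zt : ℝ)
    (hZ : Z = ∑ j, Real.exp (-β * E j))
    (hZt : Zt = ∑ j, Real.exp (-β * e (c j)))
    (p q : Fin d → ℝ)
    (hp : ∀ j, p j = Real.exp (-β * E j) / Z)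
    (hq : ∀ j, q j = Real.exp (-β * e (c j)) / Zt) :
    ∑ j, |p j - q j| ≤ Real.sqrt (4 * ε * β) := by
  rcases isEmpty_or_nonempty (Fin d) with hd | hd
  · simp
  have hεβ : 0 ≤ β * ε := mul_nonneg hβ.le ((abs_nonneg _).trans (hclose hd.some))
  have hTV := sq_sum_abs_sub_normalize_le hεβ (fun j => (exp_pos (-β * E j)).le)
    (fun j => (exp_pos (-β * e (c j))).le)
    (sum_pos (fun j _ => exp_pos _) univ_nonempty) (sum_pos (fun j _ => exp_pos _) univ_nonempty)
    (fun j => exp_neg_mul_le_exp_mul_mul_exp_neg_mul hβ.le (hclose j))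
    (fun j => exp_neg_mul_le_exp_mul_mul_exp_neg_mul hβ.le
      ((abs_sub_comm _ _).trans_le (hclose j)))
  simp only [hp, hq, hZ, hZt]
  exact le_sqrt_of_sq_le (by linarith)

/-- **Theorem (lumping eigenvalues, trace-distance bound).** If each eigenvalue `E j` is within
`ε` of its lumped value `e (c j)`, then the Gibbs distribution `p` and the lumped Gibbs
distribution `q` satisfy `‖p - q‖₁ ≤ √(4 ε β)`. -/
theorem lumped_gibbs_total_variation_bound
    {d d' : ℕ} (β ε : ℝ) (hβ : 0 < β) (hε : 0 < ε)
    (E : Fin d → ℝ) (e : Fin d' → ℝ) (c : Fin d → Fin d')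
    (hclose : ∀ j, |E j - e (c j)| ≤ ε)
    (Z Zt : ℝ)
    (hZ : Z = ∑ j, Real.exp (-β * E j))
    (hZt : Zt = ∑ j, Real.exp (-β * e (c j)))
    (p q : Fin d → ℝ)
    (hp : ∀ j, p j = Real.exp (-β * E j) / Z)
    (hq : ∀ j, q j = Real.exp (-β * e (c j)) / Zt) :
    ∑ j, |p j - q j| ≤ Real.sqrt (4 * ε * β) :=
  lumped_gibbs_total_variation_bound_general β ε hβ E e c hclose Z Zt hZ hZt p q hp hq
end

section
/- Let H ∈ M_d(ℂ) be Hermitian with spectral decomposition H = ∑_{i=1}^{d'} E_i P_i, where P_1,…,P_{d'} are nonzero pairwise orthogonal Hermitian projections summing to the identity, and let β > 0. Let σ = e^{−βH}/Tr(e^{−βH}) be the Gibbs state, define the pinching-average channel Q(X) = ∑_{i=1}^{d'} (Tr(P_i X)/Tr(P_i)) P_i and the map T_∞(X) = Tr(X) σ. Let T, T' : M_d(ℂ) → M_d(ℂ) be linear trace-preserving maps such that: T(σ) = σ; Q∘T∘Q = T∘Q; ‖T − T_∞‖_{1→1} < 1; and ‖T − T'‖_{1→1} ≤ ε. Let κ(T)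 = sup { ‖(id − T + T_∞)⁻¹(X)‖₁ / ‖X‖₁ : X ∈ M_d(ℂ), X ≠ 0, Tr(X) = 0 }. Let ρ ∈ M_d(ℂ) be a density matrix (positive semidefinite with trace 1) satisfying (Q∘T'∘Q)(ρ) = ρ, and let {F_m}_{m∈I} be a finite POVM (each F_m positive semidefinite with ∑_m F_m = 1). Then the probability distributions p(m) = Tr(F_m σ) and p'(m) = Tr(F_m ρ) satisfy ∑_{m∈I} |p(m) − p'(m)| ≤ (κ(T) + 2) ε. -/
open Matrix
open scoped ComplexOrder

/-- The trace norm `‖A‖₁ = Tr √(A* A)` of a complex matrix. -/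
noncomputable def traceNorm {d : ℕ} (A : Matrix (Fin d) (Fin d) ℂ) : ℝ :=
  (((Matrix.posSemidef_conjTranspose_mul_self A).1.eigenvectorUnitary : Matrix (Fin d) (Fin d) ℂ) *
      diagonal (((↑) : ℝ → ℂ) ∘ Real.sqrt ∘ (Matrix.posSemidef_conjTranspose_mul_self A).1.eigenvalues) *
      (star (Matrix.posSemidef_conjTranspose_mul_self A).1.eigenvectorUnitary :
        Matrix (Fin d) (Fin d) ℂ)).trace.re

/-- The `1 → 1` norm of a map on matrices, induced by the trace norm. -/
noncomputable def oneToOneNorm {d : ℕ}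
    (g : Matrix (Fin d) (Fin d) ℂ → Matrix (Fin d) (Fin d) ℂ) : ℝ :=
  sSup {r : ℝ | ∃ X, X ≠ 0 ∧ r = traceNorm (g X) / traceNorm X}

/-!
Write `Δ = σ - ρ` and `R = id - T + T∞`. Since `T σ = σ` and `Tr Δ = 0`, we get `R Δ = T ρ - ρ`.
The state `ρ = Q T' Q ρ` is `Q`-invariant, hence so is `T ρ = T Q ρ` (as `Q T Q = T Q`), so
`T ρ - ρ = Q ((T - T') ρ)`. This matrix has trace zero, and the pinching average `Q` does not
increase the trace norm, so `‖Δ‖₁ = ‖R⁻¹ (T ρ - ρ)‖₁ ≤ κ ‖(T - T') ρ‖₁ ≤ κ ε`. Finally a POVM does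
not increase the trace norm either: `∑ₘ |Tr (Fₘ Δ)| ≤ ‖Δ‖₁`.

Both contraction properties are one Cauchy–Schwarz estimate: for an orthonormal eigenbasis `(vⱼ)`
of `Y* Y` we have `Tr (Fₘ Y) = ∑ⱼ ⟪√Fₘ vⱼ, √Fₘ Y vⱼ⟫` and `∑ₘ ‖√Fₘ x‖² = ‖x‖²`, so
`∑ₘ |Tr (Fₘ Y)| ≤ ∑ⱼ ‖Y vⱼ‖ = ‖Y‖₁`; the pinching average of `Y` is `∑ᵢ cᵢ Pᵢ` with trace norm
`∑ᵢ |cᵢ| Tr Pᵢ = ∑ᵢ |Tr (Pᵢ Y)|`.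
-/

open scoped MatrixOrder InnerProductSpace

theorem Matrix.IsHermitian.trace_cfc {𝕜 n : Type*} [RCLike 𝕜] [Fintype n] [DecidableEq n]
    {A : Matrix n n 𝕜} (hA : A.IsHermitian) (f : ℝ → ℝ) :
    (cfc f A).trace = ∑ i, (f (hA.eigenvalues i) : 𝕜) := by
  rw [hA.cfc_eq, IsHermitian.cfc, Unitary.conjStarAlgAut_apply, trace_mul_cycle]
  simp

section

open scoped Matrix.Norms.L2Operator

theorem Matrix.IsHermitian.trace_exp {n : Type*} [Fintype n] [DecidableEq n]
    {A : Matrix n n ℂ} (hA : A.IsHermitian) :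
    (NormedSpace.exp A).trace = ∑ i, (Real.exp (hA.eigenvalues i) : ℂ) := by
  rw [← CFC.real_exp_eq_normedSpace_exp hA.isSelfAdjoint, hA.trace_cfc]
  rfl

end

theorem Matrix.IsHermitian.trace_exp_ne_zero {n : Type*} [Fintype n] [DecidableEq n] [Nonempty n]
    {A : Matrix n n ℂ} (hA : A.IsHermitian) : (NormedSpace.exp A).trace ≠ 0 := by
  rw [hA.trace_exp, ← Complex.ofReal_sum, Complex.ofReal_ne_zero]
  exact (Finset.sum_pos (fun i _ => Real.exp_pos _) Finset.univ_nonempty).ne'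

theorem Matrix.IsHermitian.trace_inv_trace_smul_exp {n : Type*} [Fintype n] [DecidableEq n]
    [Nonempty n] {A : Matrix n n ℂ} (hA : A.IsHermitian) :
    ((NormedSpace.exp A).trace⁻¹ • NormedSpace.exp A).trace = 1 := by
  rw [trace_smul, smul_eq_mul, inv_mul_cancel₀ hA.trace_exp_ne_zero]

theorem Matrix.isHermitian_sum_ofReal_smul {n ι : Type*} [Fintype ι] {P : ι → Matrix n n ℂ}
    (hP : ∀ i, (P i).IsHermitian) (E : ι → ℝ) : (∑ i, (E i : ℂ) • P i).IsHermitian :=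
  isSelfAdjoint_sum _ fun i _ => (hP i).smul (Complex.conj_ofReal (E i))

theorem Matrix.trace_eq_sum_inner_toEuclideanCLM {𝕜 n ι : Type*} [RCLike 𝕜] [Fintype n]
    [DecidableEq n] [Fintype ι] (M : Matrix n n 𝕜) (b : OrthonormalBasis ι 𝕜 (EuclideanSpace 𝕜 n)) :
    M.trace = ∑ j, ⟪b j, toEuclideanCLM (n := n) (𝕜 := 𝕜) M (b j)⟫_𝕜 := by
  rw [← trace_toLin_eq M (EuclideanSpace.basisFun n 𝕜).toBasis,
    ← toEuclideanLin_eq_toLin_orthonormal]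
  exact LinearMap.trace_eq_sum_inner _ b

section SingularValues

variable {d : ℕ}

theorem traceNorm_eq_re_trace_cfc_sqrt (A : Matrix (Fin d) (Fin d) ℂ) :
    traceNorm A = (cfc Real.sqrt (Aᴴ * A)).trace.re := by
  rw [(posSemidef_conjTranspose_mul_self A).1.cfc_eq]
  rfl

theorem traceNorm_eq_of_mul_self {A B : Matrix (Fin d) (Fin d) ℂ} (hB : B.PosSemidef)
    (h : B * B = Aᴴ * A) : traceNorm A = B.trace.re := by
  rw [traceNorm_eq_re_trace_cfc_sqrt, ← cfcₙ_eq_cfc,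
    ← CFC.sqrt_eq_real_sqrt _ (posSemidef_conjTranspose_mul_self A).nonneg, ← h,
    CFC.sqrt_mul_self B hB.nonneg]

theorem traceNorm_of_posSemidef {A : Matrix (Fin d) (Fin d) ℂ} (hA : A.PosSemidef) :
    traceNorm A = A.trace.re :=
  traceNorm_eq_of_mul_self hA (by rw [hA.1.eq])

theorem norm_toEuclideanCLM_eigenvectorBasis (A : Matrix (Fin d) (Fin d) ℂ) (j : Fin d) :
    ‖toEuclideanCLM (n := Fin d) (𝕜 := ℂ) A
        ((posSemidef_conjTranspose_mul_self A).1.eigenvectorBasis j)‖ =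
      √((posSemidef_conjTranspose_mul_self A).1.eigenvalues j) := by
  set hA := (posSemidef_conjTranspose_mul_self A).1
  set b := hA.eigenvectorBasis
  have hb : toEuclideanCLM (n := Fin d) (𝕜 := ℂ) (Aᴴ * A) (b j) = (hA.eigenvalues j : ℂ) • b j := by
    apply WithLp.ofLp_injective
    rw [ofLp_toEuclideanCLM, hA.mulVec_eigenvectorBasis, WithLp.ofLp_smul]
    rfl
  rw [← Real.sqrt_sq (norm_nonneg _), ← inner_self_eq_norm_sq (𝕜 := ℂ),
    ← ContinuousLinearMap.adjoint_inner_right, ← ContinuousLinearMap.star_eq_adjoint, ← map_star,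
    star_eq_conjTranspose, ← mul_apply_eq_comp, ← map_mul, hb, inner_smul_right,
    inner_self_eq_norm_sq_to_K, b.orthonormal.1 j]
  simp

theorem traceNorm_eq_sum_norm_toEuclideanCLM_eigenvectorBasis (A : Matrix (Fin d) (Fin d) ℂ) :
    traceNorm A = ∑ j, ‖toEuclideanCLM (n := Fin d) (𝕜 := ℂ) A
      ((posSemidef_conjTranspose_mul_self A).1.eigenvectorBasis j)‖ := by
  rw [traceNorm_eq_re_trace_cfc_sqrt, (posSemidef_conjTranspose_mul_self A).1.trace_cfc,
    Complex.re_sum]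
  exact Finset.sum_congr rfl fun j _ => (norm_toEuclideanCLM_eigenvectorBasis A j).symm

theorem traceNorm_nonneg (A : Matrix (Fin d) (Fin d) ℂ) : 0 ≤ traceNorm A := by
  rw [traceNorm_eq_sum_norm_toEuclideanCLM_eigenvectorBasis]
  positivity

open scoped Matrix.Norms.L2Operator

theorem l2_opNorm_le_traceNorm (A : Matrix (Fin d) (Fin d) ℂ) : ‖A‖ ≤ traceNorm A := by
  set b := (posSemidef_conjTranspose_mul_self A).1.eigenvectorBasis
  rw [← l2_opNorm_toEuclideanCLM]
  refine ContinuousLinearMap.opNorm_le_bound _ (traceNorm_nonneg A) fun x => ?_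
  conv_lhs => rw [← b.sum_repr' x]
  rw [map_sum, traceNorm_eq_sum_norm_toEuclideanCLM_eigenvectorBasis, Finset.sum_mul]
  refine (norm_sum_le _ _).trans (Finset.sum_le_sum fun j _ => ?_)
  rw [map_smul, norm_smul, mul_comm]
  gcongr
  simpa [b.orthonormal.1 j] using norm_inner_le_norm (𝕜 := ℂ) (b j) x

theorem traceNorm_le_card_mul_l2_opNorm (A : Matrix (Fin d) (Fin d) ℂ) : traceNorm A ≤ d * ‖A‖ := by
  set b := (posSemidef_conjTranspose_mul_self A).1.eigenvectorBasis
  rw [traceNorm_eq_sum_norm_toEuclideanCLM_eigenvectorBasis, ← l2_opNorm_toEuclideanCLM]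
  calc ∑ j, ‖toEuclideanCLM (n := Fin d) (𝕜 := ℂ) A (b j)‖
      ≤ ∑ _j : Fin d, ‖toEuclideanCLM (n := Fin d) (𝕜 := ℂ) A‖ :=
        Finset.sum_le_sum fun j _ => by
          simpa [b.orthonormal.1 j] using (toEuclideanCLM (n := Fin d) (𝕜 := ℂ) A).le_opNorm (b j)
    _ = d * ‖toEuclideanCLM (n := Fin d) (𝕜 := ℂ) A‖ := by simp

theorem traceNorm_pos {A : Matrix (Fin d) (Fin d) ℂ} (hA : A ≠ 0) : 0 < traceNorm A :=
  (norm_pos_iff.mpr hA).trans_le (l2_opNorm_le_traceNorm A)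

theorem exists_traceNorm_apply_le (g : Module.End ℂ (Matrix (Fin d) (Fin d) ℂ)) :
    ∃ C, ∀ X, traceNorm (g X) ≤ C * traceNorm X := by
  let g' := LinearMap.toContinuousLinearMap g
  refine ⟨d * ‖g'‖, fun X => ?_⟩
  calc traceNorm (g X) ≤ d * ‖g' X‖ := traceNorm_le_card_mul_l2_opNorm _
    _ ≤ d * (‖g'‖ * traceNorm X) := by
        gcongr
        exact (g'.le_opNorm X).trans (by gcongr; exact l2_opNorm_le_traceNorm X)
    _ = d * ‖g'‖ * traceNorm X := by ring

end SingularValues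

section InducedNorm

variable {d : ℕ}

theorem sSup_traceNorm_div_nonneg (g : Matrix (Fin d) (Fin d) ℂ → Matrix (Fin d) (Fin d) ℂ)
    (p : Matrix (Fin d) (Fin d) ℂ → Prop) :
    0 ≤ sSup {r : ℝ | ∃ X, X ≠ 0 ∧ p X ∧ r = traceNorm (g X) / traceNorm X} := by
  refine Real.sSup_nonneg ?_
  rintro r ⟨X, -, -, rfl⟩
  exact div_nonneg (traceNorm_nonneg _) (traceNorm_nonneg _)

theorem traceNorm_apply_le_sSup_mul (g : Module.End ℂ (Matrix (Fin d) (Fin d) ℂ))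
    {p : Matrix (Fin d) (Fin d) ℂ → Prop} {X : Matrix (Fin d) (Fin d) ℂ} (hX : p X) :
    traceNorm (g X) ≤
      sSup {r : ℝ | ∃ Y, Y ≠ 0 ∧ p Y ∧ r = traceNorm (g Y) / traceNorm Y} * traceNorm X := by
  rcases eq_or_ne X 0 with rfl | hX0
  · simp [traceNorm_of_posSemidef PosSemidef.zero]
  obtain ⟨C, hC⟩ := exists_traceNorm_apply_le g
  have hbdd : BddAbove {r : ℝ | ∃ Y, Y ≠ 0 ∧ p Y ∧ r = traceNorm (g Y) / traceNorm Y} := by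
    refine ⟨C, ?_⟩
    rintro r ⟨Y, hY, -, rfl⟩
    exact (div_le_iff₀ (traceNorm_pos hY)).mpr (hC Y)
  exact (div_le_iff₀ (traceNorm_pos hX0)).mp (le_csSup hbdd ⟨X, hX0, hX, rfl⟩)

theorem oneToOneNorm_nonneg (g : Matrix (Fin d) (Fin d) ℂ → Matrix (Fin d) (Fin d) ℂ) :
    0 ≤ oneToOneNorm g := by
  simpa [oneToOneNorm] using sSup_traceNorm_div_nonneg g fun _ => True

theorem traceNorm_apply_le_oneToOneNorm_mul (g : Module.End ℂ (Matrix (Fin d) (Fin d) ℂ))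
    (X : Matrix (Fin d) (Fin d) ℂ) : traceNorm (g X) ≤ oneToOneNorm g * traceNorm X := by
  simpa [oneToOneNorm] using traceNorm_apply_le_sSup_mul g (p := fun _ => True) trivial

theorem traceNorm_apply_le_oneToOneNorm_of_posSemidef
    (g : Module.End ℂ (Matrix (Fin d) (Fin d) ℂ)) {ρ : Matrix (Fin d) (Fin d) ℂ}
    (hρ : ρ.PosSemidef) (hρtrace : ρ.trace = 1) : traceNorm (g ρ) ≤ oneToOneNorm g := by
  simpa [traceNorm_of_posSemidef hρ, hρtrace] using traceNorm_apply_le_oneToOneNorm_mul g ρ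

theorem isUnit_one_sub_of_oneToOneNorm_lt_one {g : Module.End ℂ (Matrix (Fin d) (Fin d) ℂ)}
    (hg : oneToOneNorm g < 1) : IsUnit (1 - g) := by
  rw [LinearMap.isUnit_iff_ker_eq_bot, LinearMap.ker_eq_bot']
  intro X hX
  have hgX : g X = X := (sub_eq_zero.mp hX).symm
  have hle := traceNorm_apply_le_oneToOneNorm_mul g X
  rw [hgX] at hle
  by_contra hX0
  nlinarith [traceNorm_pos hX0]

end InducedNorm

theorem sub_eq_inverse_one_sub_add_apply {R M : Type*} [Semiring R] [AddCommGroup M]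
    [Module R M] {T S : Module.End R M} (hTS : IsUnit (1 - T + S)) {σ ρ : M} (hTσ : T σ = σ)
    (hS : S (σ - ρ) = 0) : σ - ρ = Ring.inverse (1 - T + S) (T ρ - ρ) := by
  have h : (1 - T + S) (σ - ρ) = T ρ - ρ := by
    rw [LinearMap.add_apply, hS, LinearMap.sub_apply, Module.End.one_apply, map_sub, hTσ]
    abel
  rw [← h, ← Module.End.mul_apply, Ring.inverse_mul_cancel _ hTS, Module.End.one_apply]

theorem sum_norm_inner_le_norm_mul_norm {𝕜 E F ι : Type*} [RCLike 𝕜] [SeminormedAddCommGroup E]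
    [NormedAddCommGroup F] [InnerProductSpace 𝕜 F] [Fintype ι] (G : ι → E → F)
    (hG : ∀ x, ∑ i, ‖G i x‖ ^ 2 = ‖x‖ ^ 2) (x y : E) :
    ∑ i, ‖⟪G i x, G i y⟫_𝕜‖ ≤ ‖x‖ * ‖y‖ :=
  calc ∑ i, ‖⟪G i x, G i y⟫_𝕜‖ ≤ ∑ i, ‖G i x‖ * ‖G i y‖ :=
        Finset.sum_le_sum fun i _ => norm_inner_le_norm _ _
    _ ≤ √(∑ i, ‖G i x‖ ^ 2) * √(∑ i, ‖G i y‖ ^ 2) := Real.sum_mul_le_sqrt_mul_sqrt _ _ _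
    _ = ‖x‖ * ‖y‖ := by rw [hG, hG, Real.sqrt_sq (norm_nonneg _), Real.sqrt_sq (norm_nonneg _)]

theorem sum_norm_trace_mul_le_traceNorm {d : ℕ} {ι : Type*} [Fintype ι]
    {F : ι → Matrix (Fin d) (Fin d) ℂ} (hF : ∀ m, (F m).PosSemidef) (hFsum : ∑ m, F m = 1)
    (Y : Matrix (Fin d) (Fin d) ℂ) :
    ∑ m, ‖(F m * Y).trace‖ ≤ traceNorm Y := by
  set b := (posSemidef_conjTranspose_mul_self Y).1.eigenvectorBasis
  set L := toEuclideanCLM (n := Fin d) (𝕜 := ℂ)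
  set G : ι → EuclideanSpace ℂ (Fin d) → EuclideanSpace ℂ (Fin d) :=
    fun m => L (CFC.sqrt (F m))
  have hinner : ∀ m x y, ⟪x, L (F m) y⟫_ℂ = ⟪G m x, G m y⟫_ℂ := by
    intro m x y
    have hsa : IsSelfAdjoint (L (CFC.sqrt (F m))) :=
      (CFC.sqrt_nonneg (F m)).isSelfAdjoint.map L
    rw [← CFC.sqrt_mul_sqrt_self (F m) (hF m).nonneg, map_mul, mul_apply_eq_comp,
      ← hsa.adjoint_eq, ContinuousLinearMap.adjoint_inner_right, hsa.adjoint_eq]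
  have hG : ∀ x, ∑ m, ‖G m x‖ ^ 2 = ‖x‖ ^ 2 := fun x =>
    calc ∑ m, ‖G m x‖ ^ 2 = ∑ m, RCLike.re ⟪x, L (F m) x⟫_ℂ := by
          simp only [hinner, inner_self_eq_norm_sq]
      _ = RCLike.re ⟪x, L (∑ m, F m) x⟫_ℂ := by
          rw [map_sum, _root_.sum_apply, inner_sum, map_sum]
      _ = ‖x‖ ^ 2 := by rw [hFsum, map_one, one_apply_eq_self, inner_self_eq_norm_sq]
  calc ∑ m, ‖(F m * Y).trace‖ = ∑ m, ‖∑ j, ⟪G m (b j), G m (L Y (b j))⟫_ℂ‖ := by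
        refine Finset.sum_congr rfl fun m _ => ?_
        rw [trace_eq_sum_inner_toEuclideanCLM _ b]
        simp only [map_mul, mul_apply_eq_comp]
        exact congrArg _ (Finset.sum_congr rfl fun j _ => hinner m _ _)
    _ ≤ ∑ m, ∑ j, ‖⟪G m (b j), G m (L Y (b j))⟫_ℂ‖ :=
        Finset.sum_le_sum fun m _ => norm_sum_le _ _
    _ = ∑ j, ∑ m, ‖⟪G m (b j), G m (L Y (b j))⟫_ℂ‖ := Finset.sum_comm
    _ ≤ ∑ j, ‖b j‖ * ‖L Y (b j)‖ :=
        Finset.sum_le_sum fun j _ => sum_norm_inner_le_norm_mul_norm G hG _ _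
    _ = traceNorm Y := by
        simp only [b.orthonormal.1, one_mul, traceNorm_eq_sum_norm_toEuclideanCLM_eigenvectorBasis]
        rfl

theorem sum_abs_re_trace_mul_sub_le_traceNorm {d : ℕ} {ι : Type*} [Fintype ι]
    {F : ι → Matrix (Fin d) (Fin d) ℂ} (hF : ∀ m, (F m).PosSemidef) (hFsum : ∑ m, F m = 1)
    (σ ρ : Matrix (Fin d) (Fin d) ℂ) :
    ∑ m, |(F m * σ).trace.re - (F m * ρ).trace.re| ≤ traceNorm (σ - ρ) :=
  calc ∑ m, |(F m * σ).trace.re - (F m * ρ).trace.re| ≤ ∑ m, ‖(F m * (σ - ρ)).trace‖ :=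
        Finset.sum_le_sum fun m _ => by
          rw [← Complex.sub_re, ← trace_sub, ← Matrix.mul_sub]
          exact Complex.abs_re_le_norm _
    _ ≤ traceNorm (σ - ρ) := sum_norm_trace_mul_le_traceNorm hF hFsum _

section Pinching

variable {𝕜 n ι : Type*} [Field 𝕜] [Fintype n] [Fintype ι]

noncomputable def pinchingAverage (P : ι → Matrix n n 𝕜) : Module.End 𝕜 (Matrix n n 𝕜) where
  toFun X := ∑ i, ((P i * X).trace / (P i).trace) • P i
  map_add' X Y := by
    simp only [Matrix.mul_add, trace_add, add_div, add_smul, Finset.sum_add_distrib]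
  map_smul' c X := by
    simp only [Matrix.mul_smul, trace_smul, smul_eq_mul, mul_div_assoc, Finset.smul_sum, smul_smul,
      RingHom.id_apply]

theorem pinchingAverage_apply (P : ι → Matrix n n 𝕜) (X : Matrix n n 𝕜) :
    pinchingAverage P X = ∑ i, ((P i * X).trace / (P i).trace) • P i :=
  rfl

variable {P : ι → Matrix n n 𝕜} (hproj : ∀ i, P i * P i = P i)
  (horth : ∀ i j, i ≠ j → P i * P j = 0)
include hproj horth

theorem mul_sum_smul_of_orthogonal (a : ι → 𝕜) (i : ι) :
    P i * ∑ j, a j • P j = a i • P i := by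
  rw [Finset.mul_sum, Finset.sum_eq_single i (fun j _ hji => by
    rw [Matrix.mul_smul, horth i j hji.symm, smul_zero]) (by simp), Matrix.mul_smul, hproj]

theorem sum_smul_mul_sum_smul_of_orthogonal (a b : ι → 𝕜) :
    (∑ i, a i • P i) * ∑ j, b j • P j = ∑ i, (a i * b i) • P i := by
  simp only [Finset.sum_mul, Matrix.smul_mul, mul_sum_smul_of_orthogonal hproj horth, smul_smul]

theorem pinchingAverage_pinchingAverage (X : Matrix n n 𝕜) :
    pinchingAverage P (pinchingAverage P X) = pinchingAverage P X := by
  simp only [pinchingAverage_apply, mul_sum_smul_of_orthogonal hproj horth, trace_smul,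
    smul_eq_mul]
  refine Finset.sum_congr rfl fun i _ => ?_
  -- a trace-zero `P i` gets the junk coefficient `_ / 0 = 0` on both sides
  rcases eq_or_ne (P i).trace 0 with h | h
  · simp [h]
  · rw [mul_div_cancel_right₀ _ h]

end Pinching

section PinchingTraceNorm

variable {d : ℕ} {ι : Type*} {P : ι → Matrix (Fin d) (Fin d) ℂ}
  (hherm : ∀ i, (P i).IsHermitian) (hproj : ∀ i, P i * P i = P i)
include hherm hproj

theorem posSemidef_of_isHermitian_of_mul_self (i : ι) : (P i).PosSemidef :=
  nonneg_iff_posSemidef.mp (IsStarProjection.nonneg ⟨hproj i, hherm i⟩)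

variable [Fintype ι] (horth : ∀ i j, i ≠ j → P i * P j = 0)
include horth

theorem traceNorm_sum_smul_of_orthogonal (c : ι → ℂ) :
    traceNorm (∑ i, c i • P i) = ∑ i, ‖c i‖ * (P i).trace.re := by
  have hB : (∑ i, (‖c i‖ : ℂ) • P i).PosSemidef := posSemidef_sum _ fun i _ =>
    (posSemidef_of_isHermitian_of_mul_self hherm hproj i).smul (by positivity)
  have hadj : (∑ i, c i • P i)ᴴ = ∑ i, star (c i) • P i := by
    simp only [conjTranspose_sum, conjTranspose_smul, (hherm _).eq]
  rw [traceNorm_eq_of_mul_self hB (by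
    simp only [hadj, sum_smul_mul_sum_smul_of_orthogonal hproj horth, RCLike.star_def,
      Complex.conj_mul', sq])]
  simp [trace_sum, trace_smul]

theorem traceNorm_pinchingAverage_le (hsum : ∑ i, P i = 1) (Y : Matrix (Fin d) (Fin d) ℂ) :
    traceNorm (pinchingAverage P Y) ≤ traceNorm Y := by
  have hP := posSemidef_of_isHermitian_of_mul_self hherm hproj
  have hnorm : ∀ i, (P i).trace.re = ‖(P i).trace‖ := fun i => by
    rw [← RCLike.norm_of_nonneg' (hP i).trace_nonneg]; simp
  calc traceNorm (pinchingAverage P Y)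
      = ∑ i, ‖(P i * Y).trace / (P i).trace‖ * (P i).trace.re :=
        traceNorm_sum_smul_of_orthogonal hherm hproj horth _
    _ ≤ ∑ i, ‖(P i * Y).trace‖ := Finset.sum_le_sum fun i _ => by
        rw [hnorm, norm_div]
        rcases eq_or_ne ‖(P i).trace‖ 0 with h | h
        · simp [h]
        · rw [div_mul_cancel₀ _ h]
    _ ≤ traceNorm Y := sum_norm_trace_mul_le_traceNorm hP hsum Y

end PinchingTraceNorm
theorem stability_of_sampling_under_channel_perturbation_general
    {d d' : ℕ} (P : Fin d' → Matrix (Fin d) (Fin d) ℂ)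
    (hherm : ∀ i, (P i).IsHermitian)
    (hproj : ∀ i, P i * P i = P i)
    (horth : ∀ i j, i ≠ j → P i * P j = 0)
    (hsum : ∑ i, P i = 1)
    (E : Fin d' → ℝ) (β : ℝ)
    (H : Matrix (Fin d) (Fin d) ℂ) (hH : H = ∑ i, (E i : ℂ) • P i)
    (σ : Matrix (Fin d) (Fin d) ℂ)
    (hσ : σ = ((NormedSpace.exp (-(β : ℂ) • H)).trace)⁻¹ • NormedSpace.exp (-(β : ℂ) • H))
    (Q : Matrix (Fin d) (Fin d) ℂ → Matrix (Fin d) (Fin d) ℂ)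
    (hQ : ∀ X, Q X = ∑ i, ((P i * X).trace / (P i).trace) • P i)
    (T T' Tinf : Module.End ℂ (Matrix (Fin d) (Fin d) ℂ))
    (hTinf : ∀ X, Tinf X = X.trace • σ)
    (hTtrace : ∀ X, (T X).trace = X.trace)
    (hTfix : T σ = σ)
    (hQTQ : ∀ X, Q (T (Q X)) = T (Q X))
    (hprim : oneToOneNorm (fun X => T X - Tinf X) < 1)
    (ε : ℝ) (hclose : oneToOneNorm (fun X => T X - T' X) ≤ ε)
    (κ : ℝ)
    (hκ : κ = sSup {r : ℝ | ∃ X, X ≠ 0 ∧ X.trace = 0 ∧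
      r = traceNorm ((Ring.inverse (1 - T + Tinf)) X) / traceNorm X})
    (ρ : Matrix (Fin d) (Fin d) ℂ)
    (hρ : ρ.PosSemidef) (hρtrace : ρ.trace = 1)
    (hρfix : Q (T' (Q ρ)) = ρ)
    {ι : Type*} [Fintype ι] (F : ι → Matrix (Fin d) (Fin d) ℂ)
    (hF : ∀ m, (F m).PosSemidef) (hFsum : ∑ m, F m = 1) :
    ∑ m, |((F m * σ).trace).re - ((F m * ρ).trace).re| ≤ (κ + 2) * ε := by
  have hQP : Q = pinchingAverage P := funext hQ
  subst hQP
  have hQρ : pinchingAverage P ρ = ρ := by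
    rw [← hρfix, pinchingAverage_pinchingAverage hproj horth]
  have : Nonempty (Fin d) := not_isEmpty_iff.mp fun _ => by
    simp [trace_eq_zero_of_isEmpty] at hρtrace
  have hHerm : H.IsHermitian := hH ▸ isHermitian_sum_ofReal_smul hherm E
  have hσtr : σ.trace = 1 := by
    rw [hσ]
    exact (hHerm.smul (IsSelfAdjoint.neg (Complex.conj_ofReal β))).trace_inv_trace_smul_exp
  have hR : IsUnit (1 - T + Tinf) := by
    rw [show 1 - T + Tinf = 1 - (T - Tinf) by abel]
    exact isUnit_one_sub_of_oneToOneNorm_lt_one hprim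
  have hΔ : σ - ρ = Ring.inverse (1 - T + Tinf) (T ρ - ρ) :=
    sub_eq_inverse_one_sub_add_apply hR hTfix
      (by rw [hTinf, trace_sub, hσtr, hρtrace, sub_self, zero_smul])
  have hTρ : T ρ - ρ = pinchingAverage P ((T - T') ρ) := by
    have hQTρ := hQTQ ρ
    rw [hQρ] at hQTρ hρfix
    rw [LinearMap.sub_apply, map_sub, hQTρ, hρfix]
  have hκ0 : 0 ≤ κ := hκ ▸ sSup_traceNorm_div_nonneg _ _
  calc ∑ m, |((F m * σ).trace).re - ((F m * ρ).trace).re|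
      ≤ traceNorm (σ - ρ) := sum_abs_re_trace_mul_sub_le_traceNorm hF hFsum σ ρ
    _ ≤ κ * traceNorm (T ρ - ρ) := by
        rw [hΔ, hκ]
        exact traceNorm_apply_le_sSup_mul _ (p := fun X => X.trace = 0)
          (by rw [trace_sub, hTtrace, sub_self])
    _ ≤ κ * traceNorm ((T - T') ρ) := by
        rw [hTρ]
        gcongr
        exact traceNorm_pinchingAverage_le hherm hproj horth hsum _
    _ ≤ κ * ε := by
        gcongr
        exact (traceNorm_apply_le_oneToOneNorm_of_posSemidef _ hρ hρtrace).trans hclose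
    _ ≤ (κ + 2) * ε := by linarith [(oneToOneNorm_nonneg _).trans hclose]

/-- **Stability of perfect sampling under perturbation of the channel.** With `σ` the Gibbs
state of `H = ∑ E i • P i`, `Q` the pinching-average channel, `T∞(X) = Tr(X) σ`, and
trace-preserving linear maps `T, T'` with `T σ = σ`, `Q∘T∘Q = T∘Q`, `‖T - T∞‖₁→₁ < 1`,
`‖T - T'‖₁→₁ ≤ ε`, any density matrix `ρ` fixed by `Q∘T'∘Q` satisfies, for every POVM `F`,
`∑ m |Tr(F m σ) - Tr(F m ρ)| ≤ (κ(T) + 2) ε`, where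
`κ(T) = sup { ‖(id - T + T∞)⁻¹ X‖₁ / ‖X‖₁ : X ≠ 0, Tr X = 0 }`. -/
theorem stability_of_sampling_under_channel_perturbation
    {d d' : ℕ} (P : Fin d' → Matrix (Fin d) (Fin d) ℂ)
    (hherm : ∀ i, (P i).IsHermitian)
    (hproj : ∀ i, P i * P i = P i)
    (hne : ∀ i, P i ≠ 0)
    (horth : ∀ i j, i ≠ j → P i * P j = 0)
    (hsum : ∑ i, P i = 1)
    (E : Fin d' → ℝ) (β : ℝ) (hβ : 0 < β)
    (H : Matrix (Fin d) (Fin d) ℂ) (hH : H = ∑ i, (E i : ℂ) • P i)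
    (σ : Matrix (Fin d) (Fin d) ℂ)
    (hσ : σ = ((NormedSpace.exp (-(β : ℂ) • H)).trace)⁻¹ • NormedSpace.exp (-(β : ℂ) • H))
    (Q : Matrix (Fin d) (Fin d) ℂ → Matrix (Fin d) (Fin d) ℂ)
    (hQ : ∀ X, Q X = ∑ i, ((P i * X).trace / (P i).trace) • P i)
    (T T' Tinf : Module.End ℂ (Matrix (Fin d) (Fin d) ℂ))
    (hTinf : ∀ X, Tinf X = X.trace • σ)
    (hTtrace : ∀ X, (T X).trace = X.trace)
    (hT'trace : ∀ X, (T' X).trace = X.trace)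
    (hTfix : T σ = σ)
    (hQTQ : ∀ X, Q (T (Q X)) = T (Q X))
    (hprim : oneToOneNorm (fun X => T X - Tinf X) < 1)
    (ε : ℝ) (hclose : oneToOneNorm (fun X => T X - T' X) ≤ ε)
    (κ : ℝ)
    (hκ : κ = sSup {r : ℝ | ∃ X, X ≠ 0 ∧ X.trace = 0 ∧
      r = traceNorm ((Ring.inverse (1 - T + Tinf)) X) / traceNorm X})
    (ρ : Matrix (Fin d) (Fin d) ℂ)
    (hρ : ρ.PosSemidef) (hρtrace : ρ.trace = 1)
    (hρfix : Q (T' (Q ρ)) = ρ)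
    {ι : Type*} [Fintype ι] (F : ι → Matrix (Fin d) (Fin d) ℂ)
    (hF : ∀ m, (F m).PosSemidef) (hFsum : ∑ m, F m = 1) :
    ∑ m, |((F m * σ).trace).re - ((F m * ρ).trace).re| ≤ (κ + 2) * ε :=
  stability_of_sampling_under_channel_perturbation_general P hherm hproj horth hsum E β H hH σ hσ Q
    hQ T T' Tinf hTinf hTtrace hTfix hQTQ hprim ε hclose κ hκ ρ hρ hρtrace hρfix F hF hFsum
end

section
/- Let A be a unital Banach algebra whose unit has norm 1, and let a, q ∈ A satisfy: q² = q, ‖q‖ ≤ 1, q·a·q = a·q, and ‖a‖ < 1. Then 1 − a and 1 − q·a·q are invertible, and (1 − q·a·q)⁻¹ = 1 − q + q·(1 − a)⁻¹·q. -/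
/-! Since `q·a·q = a·q`, the range of `q` is invariant under `a`, hence under every power of `a`
and, through the Neumann series, under `(1 - a)⁻¹`. For two mutually inverse elements `x`, `y`
leaving the range of `q` invariant, the corners `1 - q + q·x·q` and `1 - q + q·y·q` are again
mutually inverse; apply this to `x = 1 - a`, whose corner is `1 - q·a·q`. -/

section Monoid

variable {M : Type*} [Monoid M] {a q : M}

theorem mul_pow_mul_eq_pow_mul (hq : IsIdempotentElem q) (h : q * a * q = a * q) (n : ℕ) :
    q * a ^ n * q = a ^ n * q := by
  induction n with
  | zero => simpa using hq.eq
  | succ n ih =>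
    calc q * a ^ (n + 1) * q = q * a * (a ^ n * q) := by simp only [pow_succ', mul_assoc]
      _ = q * a * q * (a ^ n * q) := by rw [mul_assoc (q * a) q, ← mul_assoc q (a ^ n), ih]
      _ = a * q * (a ^ n * q) := by rw [h]
      _ = a ^ (n + 1) * q := by
        rw [mul_assoc a q, ← mul_assoc q (a ^ n), ih]; simp only [pow_succ', mul_assoc]

end Monoid

section Ring

variable {R : Type*} [Ring R] {q : R}

theorem corner_mul_corner_eq_one (hq : IsIdempotentElem q) {x y : R} (hy : q * y * q = y * q)
    (hxy : x * y = 1) : (1 - q + q * x * q) * (1 - q + q * y * q) = 1 := by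
  calc (1 - q + q * x * q) * (1 - q + q * y * q)
      = 1 - q + q * x * (q * q * y * q) + (q * q - q) + (q * y * q - q * q * y * q)
          + (q * x * q - q * x * (q * q)) := by noncomm_ring
    _ = 1 := by
      rw [hq.eq, hy, ← mul_assoc, mul_assoc q x y, hxy, mul_one, hq.eq]
      abel

theorem Units.isUnit_corner_and_inverse_corner (hq : IsIdempotentElem q) (u : Rˣ)
    (hu : q * u * q = u * q) (hu_inv : q * ↑u⁻¹ * q = ↑u⁻¹ * q) :
    IsUnit (1 - q + q * u * q) ∧ Ring.inverse (1 - q + q * u * q) = 1 - q + q * ↑u⁻¹ * q :=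
  let v : Rˣ := ⟨_, _, corner_mul_corner_eq_one hq hu_inv u.mul_inv,
    corner_mul_corner_eq_one hq hu u.inv_mul⟩
  ⟨v.isUnit, Ring.inverse_unit v⟩

end Ring

theorem mul_inverse_one_sub_mul_eq {R : Type*} [NormedRing R] [HasSummableGeomSeries R] {a q : R}
    (hq : IsIdempotentElem q) (h : q * a * q = a * q) (ha : ‖a‖ < 1) :
    q * Ring.inverse (1 - a) * q = Ring.inverse (1 - a) * q := by
  have hs := hasSum_geom_series_inverse a ha
  refine ((hs.mul_left q).mul_right q).unique ?_
  simpa only [mul_pow_mul_eq_pow_mul hq h] using hs.mul_right q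

theorem pinched_resolvent_identity_general
    {A : Type*} [NormedRing A] [CompleteSpace A]
    (a q : A) (hq : q * q = q)
    (hcomm : q * a * q = a * q) (ha : ‖a‖ < 1) :
    IsUnit (1 - a) ∧ IsUnit (1 - q * a * q) ∧
      Ring.inverse (1 - q * a * q) = 1 - q + q * Ring.inverse (1 - a) * q := by
  obtain ⟨u, hu⟩ := isUnit_one_sub_of_norm_lt_one ha
  have hcorner : 1 - q * a * q = 1 - q + q * u * q := by
    rw [hu, mul_sub, sub_mul, mul_one, hq]; abel
  have hu_inv : (↑u⁻¹ : A) = Ring.inverse (1 - a) := by rw [← hu, Ring.inverse_unit]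
  have hu_invariant : q * u * q = u * q := by
    rw [hu, mul_sub, sub_mul, mul_one, hq, hcomm, sub_mul, one_mul]
  have hu_inv_invariant : q * ↑u⁻¹ * q = ↑u⁻¹ * q :=
    hu_inv ▸ mul_inverse_one_sub_mul_eq hq hcomm ha
  rw [hcorner, ← hu_inv]
  exact ⟨hu ▸ u.isUnit,
    Units.isUnit_corner_and_inverse_corner hq u hu_invariant hu_inv_invariant⟩

/-- **Neumann-series identity for the pinched resolvent.** In a unital Banach algebra with
`‖1‖ = 1`, if `q` is an idempotent of norm at most `1` with `q·a·q = a·q` and `‖a‖ < 1`, then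
`1 - a` and `1 - q·a·q` are invertible and
`(1 - q·a·q)⁻¹ = 1 - q + q·(1 - a)⁻¹·q`. -/
theorem pinched_resolvent_identity
    {A : Type*} [NormedRing A] [NormOneClass A] [CompleteSpace A]
    (a q : A) (hq : q * q = q) (hqnorm : ‖q‖ ≤ 1)
    (hcomm : q * a * q = a * q) (ha : ‖a‖ < 1) :
    IsUnit (1 - a) ∧ IsUnit (1 - q * a * q) ∧
      Ring.inverse (1 - q * a * q) = 1 - q + q * Ring.inverse (1 - a) * q :=
  pinched_resolvent_identity_general a q hq hcomm ha
end

section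
/- Let A be a unital Banach algebra whose unit has norm 1, and let a, q ∈ A satisfy: q² = q, ‖q‖ ≤ 1, q·a·q = a·q, and ‖a‖ < 1. Then ‖(1 − q·a·q)⁻¹‖ ≤ 2 + ‖(1 − a)⁻¹‖. -/
/-!
Since `q a q = a q`, the range of `q` is invariant under `a`; on it `1 - q a q` acts as `1 - a`,
and on the range of `1 - q` as the identity. So if `u` is a left inverse of `1 - a`, then
`1 - q + q u q` is a left inverse of `1 - q a q`, of norm at most
`‖1‖ + ‖q‖ + ‖q‖ ‖u‖ ‖q‖ ≤ 2 + ‖u‖`. As `‖q a q‖ ≤ ‖a‖ < 1`, the Neumann series makes both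
`1 - a` and `1 - q a q` units, so these left inverses are the inverses.
-/

theorem IsIdempotentElem.one_sub_add_mul_mul_mul_one_sub_mul_mul_eq_one {R : Type*} [Ring R]
    {a q u : R} (hq : IsIdempotentElem q) (hcomm : q * a * q = a * q) (hu : u * (1 - a) = 1) :
    (1 - q + q * u * q) * (1 - q * a * q) = 1 := by
  have hpinch : (1 - q + q * u * q) * (q * a * q) = q * u * a * q :=
    calc (1 - q + q * u * q) * (q * a * q) = (1 - q) * q * a * q + q * u * (q * q) * a * q := by
          noncomm_ring
      _ = q * u * (q * a * q) := by rw [hq.one_sub_mul_self, hq.eq]; noncomm_ring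
      _ = q * u * a * q := by rw [hcomm]; noncomm_ring
  calc (1 - q + q * u * q) * (1 - q * a * q) = 1 - q + q * (u * (1 - a)) * q := by
        rw [mul_sub, mul_one, hpinch]; noncomm_ring
    _ = 1 := by rw [hu, mul_one, hq.eq, sub_add_cancel]

theorem norm_mul_mul_le_of_norm_le_one {R : Type*} [NonUnitalSeminormedRing R] {p q : R}
    (hp : ‖p‖ ≤ 1) (hq : ‖q‖ ≤ 1) (x : R) : ‖p * x * q‖ ≤ ‖x‖ :=
  calc ‖p * x * q‖ ≤ ‖p‖ * ‖x‖ * ‖q‖ := norm_mul₃_le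
    _ ≤ 1 * ‖x‖ * 1 := by gcongr
    _ = ‖x‖ := by ring

/-- **Norm bound for the pinched resolvent** (the inequality `κ(QTQ) ≤ 2 + κ(T)`).
In a unital Banach algebra with `‖1‖ = 1`, if `q` is an idempotent of norm at most `1` with
`q·a·q = a·q` and `‖a‖ < 1`, then `‖(1 - q·a·q)⁻¹‖ ≤ 2 + ‖(1 - a)⁻¹‖`. -/
theorem pinched_resolvent_norm_bound
    {A : Type*} [NormedRing A] [NormOneClass A] [CompleteSpace A]
    (a q : A) (hq : q * q = q) (hqnorm : ‖q‖ ≤ 1)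
    (hcomm : q * a * q = a * q) (ha : ‖a‖ < 1) :
    ‖Ring.inverse (1 - q * a * q)‖ ≤ 2 + ‖Ring.inverse (1 - a)‖ := by
  set u := Ring.inverse (1 - a)
  have hu : u * (1 - a) = 1 := Ring.inverse_mul_cancel _ (Units.oneSub a ha).isUnit
  have hunit : IsUnit (1 - q * a * q) :=
    (Units.oneSub _ ((norm_mul_mul_le_of_norm_le_one hqnorm hqnorm a).trans_lt ha)).isUnit
  have hinv : Ring.inverse (1 - q * a * q) = 1 - q + q * u * q := by
    rw [← one_mul (Ring.inverse _), eq_comm, Ring.eq_mul_inverse_iff_mul_eq _ _ _ hunit]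
    exact IsIdempotentElem.one_sub_add_mul_mul_mul_one_sub_mul_mul_eq_one hq hcomm hu
  rw [hinv]
  calc ‖1 - q + q * u * q‖ ≤ ‖1 - q‖ + ‖q * u * q‖ := norm_add_le _ _
    _ ≤ ‖(1 : A)‖ + ‖q‖ + ‖u‖ :=
        add_le_add (norm_sub_le _ _) (norm_mul_mul_le_of_norm_le_one hqnorm hqnorm u)
    _ ≤ 2 + ‖u‖ := by rw [norm_one]; linarith
end
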